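/- arXiv:0901.1422 — 3 statements merged into one kernel-verified Lean document; each statement's English description precedes it below -/
import Mathlib

section
/- Let $J$ be a homogeneous two-sided ideal in $\mathbb{C}\langle x_1, \ldots, x_d\rangle$ and let $H$ be a fixed infinite-dimensional separable Hilbert space. Define $Z(J) = \{(T_1,\ldots,T_d) \in B(H)^d : p(T_1,\ldots,T_d) = 0 \text{ for all } p \in J\}$ and $I(Z(J)) = \{p : p(T_1,\ldots,T_d) = 0 \text{ for all } (T_1,\ldots,T_d) \in Z(J)\}$. Then $I(Z(J)) = J$. -/
/-!
Let `A = ℂ⟨x_1, …, x_d⟩`. If `p` vanishes on `Z(J)`, choose `N ≥ deg p` and let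
`K = J + A_{>N}`, where `A_{>N}` is spanned by the monomials of degree `> N`. Then `A ⧸ K` is
finite-dimensional and `A` acts on it by left multiplication. Embed `A ⧸ K` into `H` and let `A`
act on the (nonzero) orthogonal complement through the constant term; this is a unital
representation, and it kills `J` because `J` is two-sided and, being homogeneous and proper, has no
constant terms. Hence it kills `p`, so `p = p · 1 ∈ K`, and truncating to degree `≤ N` (which
preserves the homogeneous ideal `J`) gives `p ∈ J`.
-/

/-- The space of homogeneous elements of degree `n` of the free algebra
`ℂ⟨x_1, …, x_d⟩`: the span of products of `n` generators. -/
noncomputable def freeGrade (d n : ℕ) : Submodule ℂ (FreeAlgebra ℂ (Fin d)) :=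
  (Submodule.span ℂ (Set.range (FreeAlgebra.ι ℂ : Fin d → FreeAlgebra ℂ (Fin d)))) ^ n

open Filter Submodule

namespace FreeAlgebra

variable {R X : Type*}

section CommSemiring

variable [CommSemiring R]

theorem basisFreeMonoid_apply (w : FreeMonoid X) :
    basisFreeMonoid R X w = FreeMonoid.lift (ι R) w := by
  simp [basisFreeMonoid, equivMonoidAlgebraFreeMonoid]

theorem basisFreeMonoid_mul (u w : FreeMonoid X) :
    basisFreeMonoid R X (u * w) = basisFreeMonoid R X u * basisFreeMonoid R X w := by
  simp only [basisFreeMonoid_apply, map_mul]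

variable (R) in
noncomputable def truncate (N : ℕ) : FreeAlgebra R X →ₗ[R] FreeAlgebra R X :=
  (basisFreeMonoid R X).constr R fun w => if w.length ≤ N then basisFreeMonoid R X w else 0

variable {N : ℕ}

theorem truncate_basisFreeMonoid (w : FreeMonoid X) :
    truncate R N (basisFreeMonoid R X w) =
      if w.length ≤ N then basisFreeMonoid R X w else 0 :=
  (basisFreeMonoid R X).constr_basis R _ w

theorem truncate_truncate (x : FreeAlgebra R X) : truncate R N (truncate R N x) = truncate R N x :=
  LinearMap.congr_fun ((basisFreeMonoid R X).ext (f₁ := truncate R N ∘ₗ truncate R N)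
    fun w => by
      simp only [LinearMap.comp_apply, truncate_basisFreeMonoid]
      split_ifs with h <;> simp [truncate_basisFreeMonoid, h]) x

theorem truncate_mul_truncate (a x : FreeAlgebra R X) :
    truncate R N (a * truncate R N x) = truncate R N (a * x) := by
  have key := LinearMap.ext_basis (basisFreeMonoid R X) (basisFreeMonoid R X)
    (B := ((LinearMap.mul R _).compl₂ (truncate R N)).compr₂ (truncate R N))
    (B' := (LinearMap.mul R _).compr₂ (truncate R N)) fun u w => by
      simp only [LinearMap.compr₂_apply, LinearMap.compl₂_apply, LinearMap.mul_apply',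
        truncate_basisFreeMonoid]
      split_ifs with hw
      · rfl
      · rw [mul_zero, map_zero, ← basisFreeMonoid_mul, truncate_basisFreeMonoid,
          if_neg (by simp; omega)]
  exact congr($key a x)

theorem eventually_truncate_eq_self (x : FreeAlgebra R X) : ∀ᶠ N in atTop, truncate R N x = x := by
  have hx : x ∈ span R (Set.range (basisFreeMonoid R X)) := by
    rw [Module.Basis.span_eq]; trivial
  induction hx using Submodule.span_induction with
  | mem _ hy =>
    obtain ⟨w, rfl⟩ := hy
    filter_upwards [eventually_ge_atTop w.length] with N hN
    simp [truncate_basisFreeMonoid, hN]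
  | zero => simp
  | add _ _ _ _ hx hy => filter_upwards [hx, hy] with N hx hy; simp [hx, hy]
  | smul _ _ _ hx => filter_upwards [hx] with N hx; simp [hx]

theorem pow_span_range_ι_le (n : ℕ) :
    span R (Set.range (ι R : X → FreeAlgebra R X)) ^ n ≤
      span R (basisFreeMonoid R X '' {w | w.length = n}) := by
  induction n with
  | zero =>
    rw [pow_zero, one_eq_span]
    refine span_mono ?_
    rintro _ rfl
    exact ⟨1, rfl, by simp [basisFreeMonoid_apply]⟩
  | succ n ih =>
    rw [pow_succ']
    refine (mul_le_mul' le_rfl ih).trans ?_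
    rw [span_mul_span, span_le]
    rintro _ ⟨_, ⟨i, rfl⟩, _, ⟨w, hw, rfl⟩, rfl⟩
    refine subset_span ⟨FreeMonoid.of i * w, ?_, ?_⟩
    · simp_all [add_comm]
    · simp [basisFreeMonoid_apply]

theorem truncate_of_mem_pow {n : ℕ} {y : FreeAlgebra R X}
    (hy : y ∈ span R (Set.range (ι R : X → FreeAlgebra R X)) ^ n) :
    truncate R N y = if n ≤ N then y else 0 := by
  have hy' := pow_span_range_ι_le n hy
  split_ifs with h
  · exact LinearMap.eqOn_span (g := LinearMap.id)
      (by rintro _ ⟨w, rfl, rfl⟩; simp [truncate_basisFreeMonoid, h]) hy'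
  · exact LinearMap.eqOn_span (g := 0)
      (by rintro _ ⟨w, rfl, rfl⟩; simp [truncate_basisFreeMonoid, h]) hy'

theorem le_comap_truncate {P : Submodule R (FreeAlgebra R X)}
    (hP : P ≤ span R {p | p ∈ P ∧ ∃ n, p ∈ span R (Set.range (ι R : X → FreeAlgebra R X)) ^ n})
    (N : ℕ) : P ≤ P.comap (truncate R N) :=
  hP.trans <| span_le.mpr fun y ⟨hyP, n, hy⟩ => by
    rw [SetLike.mem_coe, Submodule.mem_comap, truncate_of_mem_pow hy]
    split_ifs
    exacts [hyP, zero_mem _]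

theorem algebraMap_algebraMapInv (x : FreeAlgebra R X) :
    algebraMap R _ (algebraMapInv x) = truncate R 0 x := by
  refine LinearMap.congr_fun ((basisFreeMonoid R X).ext
    (f₁ := Algebra.linearMap R _ ∘ₗ algebraMapInv.toLinearMap) fun w => ?_) x
  rw [LinearMap.comp_apply, truncate_basisFreeMonoid]
  cases w using FreeMonoid.casesOn <;> simp [basisFreeMonoid_apply, algebraMapInv]

theorem finite_range_truncate [Finite X] :
    Module.Finite R (LinearMap.range (truncate R N : FreeAlgebra R X →ₗ[R] _)) := by
  rw [truncate, Module.Basis.constr_range]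
  refine Module.Finite.span_of_finite R <| Set.Finite.subset
    (((List.finite_length_le X N).image (basisFreeMonoid R X ∘ FreeMonoid.ofList)).insert 0) ?_
  rintro _ ⟨w, rfl⟩
  dsimp only
  split_ifs with h
  · exact Or.inr ⟨w.toList, h, rfl⟩
  · exact Or.inl rfl

variable (R N) in
noncomputable def highDegreeIdeal : Ideal (FreeAlgebra R X) :=
  { LinearMap.ker (truncate R N) with
    smul_mem' := fun a x (hx : truncate R N x = 0) => by
      show truncate R N (a * x) = 0
      rw [← truncate_mul_truncate, hx, mul_zero, map_zero] }

theorem mem_highDegreeIdeal {x : FreeAlgebra R X} :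
    x ∈ highDegreeIdeal R N ↔ truncate R N x = 0 :=
  Iff.rfl

end CommSemiring

theorem finite_quotient_of_highDegreeIdeal_le [CommRing R] [Finite X] {N : ℕ}
    {I : Ideal (FreeAlgebra R X)} (hI : highDegreeIdeal R N ≤ I) :
    Module.Finite R (FreeAlgebra R X ⧸ I) := by
  have := finite_range_truncate (R := R) (X := X) (N := N)
  refine Module.Finite.of_surjective
    ((I.mkQ.restrictScalars R).comp (LinearMap.range (truncate R N)).subtype) ?_
  rintro ⟨x⟩
  refine ⟨⟨truncate R N x, LinearMap.mem_range_self _ x⟩, ?_⟩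
  refine (Submodule.Quotient.eq I).mpr (hI ?_)
  simp [mem_highDegreeIdeal, truncate_truncate]

theorem algebraMapInv_eq_zero_of_truncate_mem {K : Type*} [Field K] {I : Ideal (FreeAlgebra K X)}
    (h1 : 1 ∉ I) {x : FreeAlgebra K X} (hx : truncate K 0 x ∈ I) : algebraMapInv x = 0 := by
  by_contra hx0
  rw [← algebraMap_algebraMapInv] at hx
  apply h1
  simpa [← map_mul, inv_mul_cancel₀ hx0] using
    I.mul_mem_left (algebraMap K _ (algebraMapInv x)⁻¹) hx

end FreeAlgebra

theorem Ideal.lsmul_quotient_eq_zero_iff {R A : Type*} [CommRing R] [Ring A] [Algebra R A]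
    (I : Ideal A) (a : A) : Algebra.lsmul R R (A ⧸ I) a = 0 ↔ ∀ b, a * b ∈ I := by
  have key (b : A) : Algebra.lsmul R R (A ⧸ I) a (Submodule.Quotient.mk b) = 0 ↔ a * b ∈ I := by
    rw [Algebra.lsmul_apply, ← Submodule.Quotient.mk_smul, Submodule.Quotient.mk_eq_zero,
      smul_eq_mul]
  refine ⟨fun h b => (key b).mp congr($h _), fun h => LinearMap.ext fun x => ?_⟩
  obtain ⟨b, rfl⟩ := Submodule.Quotient.mk_surjective I x
  exact (key b).mpr (h b)

namespace Submodule

variable {𝕜 E : Type*} [RCLike 𝕜] [NormedAddCommGroup E] [InnerProductSpace 𝕜 E]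
  (K : Submodule 𝕜 E) [K.HasOrthogonalProjection]

noncomputable def blockDiagonal : (K →L[𝕜] K) × 𝕜 →ₐ[𝕜] (E →L[𝕜] E) :=
  AlgHom.ofLinearMap
    { toFun := fun S => K.subtypeL ∘L S.1 ∘L K.orthogonalProjectionOnto +
        S.2 • (1 - K.starProjection)
      map_add' := fun _ _ => by ext; simp [add_smul]; abel
      map_smul' := fun _ _ => by ext; simp [smul_smul, smul_sub] }
    (by ext; simp)
    (by
      rintro ⟨S, a⟩ ⟨T, b⟩
      ext x
      have hP : K.orthogonalProjectionOnto (K.starProjection x) = K.orthogonalProjectionOnto x :=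
        orthogonalProjectionOnto_mem_subspace_eq_self _
      have hP' : K.starProjection (K.starProjection x) = K.starProjection x :=
        starProjection_mem_subspace_eq_self (K.orthogonalProjectionOnto x)
      simp [hP, hP', smul_smul])

theorem blockDiagonal_injective (hK : K ≠ ⊤) : Function.Injective K.blockDiagonal := by
  refine (injective_iff_map_eq_zero _).mpr ?_
  rintro ⟨S, c⟩ h
  have hS (x : E) : (S (K.orthogonalProjectionOnto x) : E) + c • (x - K.starProjection x) = 0 :=
    congr($h x)
  obtain ⟨u, hu, hu0⟩ := exists_mem_ne_zero_of_ne_bot (mt orthogonal_eq_bot_iff.mp hK)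
  have hc : c = 0 := by
    simpa [orthogonalProjectionOnto_apply_of_mem_orthogonal hu,
      (starProjection_apply_eq_zero_iff K).mpr hu, hu0] using hS u
  refine Prod.ext (ContinuousLinearMap.ext fun w => ?_) hc
  simpa [hc, orthogonalProjectionOnto_mem_subspace_eq_self] using hS w

end Submodule

universe u v

theorem exists_injective_algHom_end_prod {𝕜 : Type*} {E : Type u} {V : Type v} [RCLike 𝕜]
    [NormedAddCommGroup E] [InnerProductSpace 𝕜 E] [AddCommGroup V] [Module 𝕜 V]
    [FiniteDimensional 𝕜 V]
    (hE : ¬ FiniteDimensional 𝕜 E) :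
    ∃ φ : Module.End 𝕜 V × 𝕜 →ₐ[𝕜] (E →L[𝕜] E), Function.Injective φ := by
  have hrank : Cardinal.lift.{u} (Module.rank 𝕜 V) < Cardinal.lift.{v} (Module.rank 𝕜 E) :=
    (Cardinal.lift_lt_aleph0.mpr (Module.rank_lt_aleph0 𝕜 V)).trans_le
      (Cardinal.aleph0_le_lift.mpr (not_lt.mp (mt Module.rank_lt_aleph0_iff.mp hE)))
  obtain ⟨f, hf⟩ := Module.Free.exists_linearMap_injective_of_lift_rank_lt hrank
  have hK : LinearMap.range f ≠ ⊤ := fun h =>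
    hE ((LinearEquiv.ofTop _ h).finiteDimensional)
  let e := LinearEquiv.ofInjective f hf
  refine ⟨(LinearMap.range f).blockDiagonal.comp
    (AlgHom.prodMap ((Module.End.toContinuousLinearMap _).toAlgHom.comp
      (e.conjAlgEquiv 𝕜).toAlgHom) (AlgHom.id 𝕜 𝕜)),
    (Submodule.blockDiagonal_injective _ hK).comp (Function.Injective.prodMap
      ((Module.End.toContinuousLinearMap _).injective.comp (e.conjAlgEquiv 𝕜).injective)
      Function.injective_id)⟩

theorem stmt7_general (d : ℕ) (H : Type*) [NormedAddCommGroup H] [InnerProductSpace ℂ H]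
    (hinf : ¬ FiniteDimensional ℂ H)
    (J : Ideal (FreeAlgebra ℂ (Fin d)))
    (htwosided : ∀ a ∈ J, ∀ r : FreeAlgebra ℂ (Fin d), a * r ∈ J)
    (hhom : Submodule.restrictScalars ℂ J =
      Submodule.span ℂ {p : FreeAlgebra ℂ (Fin d) | p ∈ J ∧ ∃ n, p ∈ freeGrade d n}) :
    {p : FreeAlgebra ℂ (Fin d) |
        ∀ T : Fin d → (H →L[ℂ] H),
          (∀ q ∈ J, FreeAlgebra.lift ℂ T q = 0) → FreeAlgebra.lift ℂ T p = 0}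
      = (J : Set (FreeAlgebra ℂ (Fin d))) := by
  open FreeAlgebra in
  refine Set.Subset.antisymm (fun p hp => ?_) fun q hq T hT => hT q hq
  by_cases h1 : (1 : FreeAlgebra ℂ (Fin d)) ∈ J
  · simp [(Ideal.eq_top_iff_one J).mpr h1]
  have htrunc := le_comap_truncate hhom.le
  obtain ⟨N, hN⟩ := (eventually_truncate_eq_self p).exists
  let K := J ⊔ highDegreeIdeal ℂ N
  have := finite_quotient_of_highDegreeIdeal_le (le_sup_right : _ ≤ K)
  obtain ⟨φ, hφ⟩ := exists_injective_algHom_end_prod (V := FreeAlgebra ℂ (Fin d) ⧸ K) hinf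
  let ψ := φ.comp ((Algebra.lsmul ℂ ℂ _).prod (algebraMapInv (X := Fin d)))
  have hψ (a) : ψ a = 0 ↔ (∀ b, a * b ∈ K) ∧ algebraMapInv a = 0 := by
    simp [ψ, map_eq_zero_iff φ hφ, Prod.ext_iff, Ideal.lsmul_quotient_eq_zero_iff]
  have hψJ : ∀ q ∈ J, lift ℂ (ψ ∘ ι ℂ) q = 0 := fun q hq => by
    rw [lift_comp_ι]
    exact (hψ q).mpr ⟨fun b => le_sup_left (a := J) (htwosided q hq b),
      algebraMapInv_eq_zero_of_truncate_mem h1 (htrunc 0 hq)⟩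
  have hpK : p ∈ K := by
    simpa using ((hψ p).mp (lift_comp_ι ψ ▸ hp (ψ ∘ ι ℂ) hψJ)).1 1
  obtain ⟨y, hy, z, hz, rfl⟩ := Submodule.mem_sup.mp hpK
  rw [← hN, map_add, mem_highDegreeIdeal.mp hz, add_zero]
  exact htrunc N hy

/-- Noncommutative projective Nullstellensatz: if `J` is a homogeneous two-sided ideal of
`ℂ⟨x_1, …, x_d⟩` and `H` is an infinite-dimensional separable Hilbert space, then
`I(Z(J)) = J`, where `Z(J)` is the set of `d`-tuples of bounded operators annihilating `J`. -/
theorem stmt7 (d : ℕ) (H : Type*) [NormedAddCommGroup H] [InnerProductSpace ℂ H]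
    [CompleteSpace H] [TopologicalSpace.SeparableSpace H]
    (hinf : ¬ FiniteDimensional ℂ H)
    (J : Ideal (FreeAlgebra ℂ (Fin d)))
    (htwosided : ∀ a ∈ J, ∀ r : FreeAlgebra ℂ (Fin d), a * r ∈ J)
    (hhom : Submodule.restrictScalars ℂ J =
      Submodule.span ℂ {p : FreeAlgebra ℂ (Fin d) | p ∈ J ∧ ∃ n, p ∈ freeGrade d n}) :
    {p : FreeAlgebra ℂ (Fin d) |
        ∀ T : Fin d → (H →L[ℂ] H),
          (∀ q ∈ J, FreeAlgebra.lift ℂ T q = 0) → FreeAlgebra.lift ℂ T p = 0}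
      = (J : Set (FreeAlgebra ℂ (Fin d))) :=
  stmt7_general d H hinf J htwosided hhom
end

section
/- Let $J$ be a homogeneous two-sided ideal in $\mathbb{C}\langle x_1,\ldots,x_d\rangle$ and let $H$ be an infinite-dimensional separable Hilbert space. Then $Z(J) = \{(0,\ldots,0)\}$ (the zero tuple in $B(H)^d$) if and only if $J$ is the ideal generated by $x_1, \ldots, x_d$. -/
/-!
Evaluation at the zero tuple is `p ↦ p(0) • 1`, whose kernel is the augmentation ideal
`I = (x_1, …, x_d)`; so `0 ∈ Z(J)` already forces `J ⊆ I`, and `Z(I) = {0}` is clear.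
Conversely, suppose `J ⊆ I` is homogeneous and some `x_i ∉ J`. Pick a linear functional `ψ`
vanishing on `J` with `ψ(x_i) ≠ 0`, and a nonzero `S ∈ B(H)` with `S² = 0` (rank one,
`S v = g(v) w` with `g(w) = 0`). Then `T_j = ψ(x_j) S` kills every
homogeneous element of `J`: in degree `0` there are none but `0`, in degree `1` evaluation
is `q ↦ ψ(q) S`, and in degree `≥ 2` everything is a multiple of `S² = 0`. So `T ∈ Z(J)`
is a nonzero tuple.
-/

theorem ContinuousLinearMap.exists_ne_zero_mul_self_eq_zero {𝕜 E : Type*} [RCLike 𝕜]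
    [NormedAddCommGroup E] [NormedSpace 𝕜 E] (hE : 1 < Module.rank 𝕜 E) :
    ∃ S : E →L[𝕜] E, S ≠ 0 ∧ S * S = 0 := by
  have : Nontrivial E := rank_pos_iff_nontrivial.1 (zero_lt_one.trans hE)
  obtain ⟨v, hv⟩ := exists_ne (0 : E)
  obtain ⟨g, -, hgv⟩ := exists_dual_vector 𝕜 v (norm_ne_zero_iff.2 hv)
  have hker : LinearMap.ker (g : E →ₗ[𝕜] 𝕜) ≠ ⊥ := fun h => by
    have := LinearMap.lift_rank_le_of_injective _ (LinearMap.ker_eq_bot.1 h)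
    simp only [Module.rank_self, Cardinal.lift_one, Cardinal.lift_le_one_iff] at this
    exact hE.not_ge this
  obtain ⟨w, hgw : g w = 0, hw0⟩ := (Submodule.ne_bot_iff _).1 hker
  refine ⟨g.smulRight w, fun h => ?_, ?_⟩
  · have := congr($h v)
    simp [hgv, hv, hw0] at this
  · ext x
    simp [hgw]

namespace FreeAlgebra

section CommRing

variable {R X : Type*} [CommRing R]

theorem sub_algebraMap_algebraMapInv_mem_span (p : FreeAlgebra R X) :
    p - algebraMap R _ (algebraMapInv p) ∈ Ideal.span (Set.range (ι R)) := by
  induction p using FreeAlgebra.induction with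
  | grade0 r => simp [algebraMapInv]
  | grade1 x => simpa [algebraMapInv] using Ideal.subset_span (Set.mem_range_self x)
  | mul a b ha hb =>
    have key : a * b - algebraMap R _ (algebraMapInv (a * b)) =
        a * (b - algebraMap R _ (algebraMapInv b)) +
          algebraMapInv b • (a - algebraMap R _ (algebraMapInv a)) := by
      rw [Algebra.smul_def, Algebra.commutes, map_mul, map_mul, mul_sub, sub_mul]
      abel
    rw [key]
    exact add_mem (Ideal.mul_mem_left _ _ hb) (Submodule.smul_of_tower_mem _ _ ha)
  | add a b ha hb =>
    simpa [add_sub_add_comm] using add_mem ha hb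

theorem ker_algebraMapInv :
    RingHom.ker (algebraMapInv : FreeAlgebra R X →ₐ[R] R) = Ideal.span (Set.range (ι R)) := by
  refine le_antisymm (fun p hp => ?_) (Ideal.span_le.2 ?_)
  · simpa [(RingHom.mem_ker).1 hp] using sub_algebraMap_algebraMapInv_mem_span p
  · rintro _ ⟨x, rfl⟩
    simp [algebraMapInv]

theorem eq_zero_of_mem_one_of_mem_span {p : FreeAlgebra R X} (h1 : p ∈ (1 : Submodule R _))
    (hp : p ∈ Ideal.span (Set.range (ι R))) : p = 0 := by
  obtain ⟨r, rfl⟩ := Submodule.mem_one.1 h1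
  rw [← ker_algebraMapInv, RingHom.mem_ker] at hp
  simp_all [algebraMapInv]

variable {A : Type*} [Ring A] [Algebra R A]

theorem lift_smul_apply_of_mem_span (ψ : FreeAlgebra R X →ₗ[R] R) (S : A)
    {p : FreeAlgebra R X} (hp : p ∈ Submodule.span R (Set.range (ι R))) :
    lift R (fun x => ψ (ι R x) • S) p = ψ p • S := by
  have hgen : Set.EqOn (lift R (fun x => ψ (ι R x) • S)).toLinearMap (ψ.smulRight S)
      (Set.range (ι R)) := by
    rintro _ ⟨x, rfl⟩
    simp
  exact LinearMap.eqOn_span' hgen hp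

theorem lift_smul_apply_eq_zero_of_mem_pow {S : A} (hS : S * S = 0) (c : X → R) {n : ℕ}
    {p : FreeAlgebra R X} (hp : p ∈ Submodule.span R (Set.range (ι R)) ^ (n + 2)) :
    lift R (fun x => c x • S) p = 0 := by
  have hgen : (Submodule.span R (Set.range (ι R))).map
      (lift R (fun x => c x • S)).toLinearMap ≤ R ∙ S := by
    rw [Submodule.map_span, Submodule.span_le]
    rintro _ ⟨_, ⟨x, rfl⟩, rfl⟩
    simpa using Submodule.smul_mem _ (c x) (Submodule.mem_span_singleton_self S)
  have hsq : (R ∙ S) * (R ∙ S) = ⊥ := by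
    rw [Submodule.span_mul_span, Set.singleton_mul_singleton, hS, Submodule.span_zero_singleton]
  have hpow : (R ∙ S) ^ (n + 2) = ⊥ := by
    rw [pow_add, sq, hsq, Submodule.mul_bot]
  have hmem := Submodule.mem_map_of_mem (f := (lift R (fun x => c x • S)).toLinearMap) hp
  rw [Submodule.map_pow] at hmem
  simpa [hpow] using pow_le_pow_left' hgen (n + 2) hmem

theorem lift_smul_eq_zero_of_homogeneous (J : Ideal (FreeAlgebra R X))
    (hJ : J ≤ Ideal.span (Set.range (ι R)))
    (hhom : J.restrictScalars R = Submodule.span R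
      {p | p ∈ J ∧ ∃ n, p ∈ Submodule.span R (Set.range (ι R)) ^ n})
    (ψ : FreeAlgebra R X →ₗ[R] R) (hψ : ∀ p ∈ J, ψ p = 0) {S : A} (hS : S * S = 0) :
    ∀ p ∈ J, lift R (fun x => ψ (ι R x) • S) p = 0 := by
  suffices J.restrictScalars R ≤ LinearMap.ker (lift R (fun x => ψ (ι R x) • S)).toLinearMap from
    fun p hp => this hp
  rw [hhom, Submodule.span_le]
  rintro p ⟨hpJ, n | n | n, hpn⟩
  · simp [eq_zero_of_mem_one_of_mem_span hpn (hJ hpJ)]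
  · rw [pow_one] at hpn
    simp [lift_smul_apply_of_mem_span ψ S hpn, hψ p hpJ]
  · exact lift_smul_apply_eq_zero_of_mem_pow hS _ hpn

end CommRing

theorem ker_lift_zero {K X A : Type*} [Field K] [Ring A] [Algebra K A] [Nontrivial A] :
    RingHom.ker (lift K (0 : X → A)) = Ideal.span (Set.range (ι K)) := by
  have : lift K (0 : X → A) = (Algebra.ofId K A).comp algebraMapInv := by
    ext; simp [algebraMapInv]
  ext p
  rw [← ker_algebraMapInv, RingHom.mem_ker, RingHom.mem_ker, this]
  simp

end FreeAlgebra

open FreeAlgebra in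
theorem stmt8_general (d : ℕ) (H : Type*) [NormedAddCommGroup H] [InnerProductSpace ℂ H]
    (hinf : ¬ FiniteDimensional ℂ H)
    (J : Ideal (FreeAlgebra ℂ (Fin d)))
    (hhom : Submodule.restrictScalars ℂ J =
      Submodule.span ℂ {p : FreeAlgebra ℂ (Fin d) | p ∈ J ∧ ∃ n, p ∈ freeGrade d n}) :
    {T : Fin d → (H →L[ℂ] H) | ∀ p ∈ J, FreeAlgebra.lift ℂ T p = 0} = {0}
      ↔ J = Ideal.span (Set.range (FreeAlgebra.ι ℂ : Fin d → FreeAlgebra ℂ (Fin d))) := by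
  have hrank : 1 < Module.rank ℂ H :=
    Cardinal.one_lt_aleph0.trans_le (not_lt.1 (mt Module.rank_lt_aleph0_iff.1 hinf))
  have : Nontrivial H := rank_pos_iff_nontrivial.1 (zero_lt_one.trans hrank)
  constructor
  · intro hZ
    have hJ : J ≤ Ideal.span (Set.range (ι ℂ)) := by
      rw [← ker_lift_zero (A := H →L[ℂ] H)]
      exact (Set.ext_iff.1 hZ 0).2 rfl
    obtain ⟨S, hS0, hS⟩ := ContinuousLinearMap.exists_ne_zero_mul_self_eq_zero hrank
    refine le_antisymm hJ (Ideal.span_le.2 ?_)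
    rintro _ ⟨i, rfl⟩
    by_contra hi
    obtain ⟨ψ, hψi, hψJ⟩ :=
      Submodule.exists_dual_map_eq_bot_of_notMem (p := J.restrictScalars ℂ) hi inferInstance
    have hT := hZ.subset <| lift_smul_eq_zero_of_homogeneous J hJ hhom ψ
      (fun p hp => (Submodule.eq_bot_iff _).1 hψJ _ (Submodule.mem_map_of_mem hp)) hS
    have hTi : ψ (ι ℂ i) • S = 0 := by simpa using congrFun hT i
    exact hψi ((smul_eq_zero.1 hTi).resolve_right hS0)
  · rintro rfl
    ext T
    simp only [Set.mem_ofPred_eq, Set.mem_singleton_iff]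
    refine ⟨fun h => funext fun i => ?_, ?_⟩
    · simpa using h _ (Ideal.subset_span (Set.mem_range_self i))
    · rintro rfl p hp
      rwa [← ker_lift_zero (A := H →L[ℂ] H), RingHom.mem_ker] at hp

/-- For a homogeneous two-sided ideal `J` of `ℂ⟨x_1, …, x_d⟩` and an infinite-dimensional
separable Hilbert space `H`, the zero set `Z(J) ⊆ B(H)^d` is the singleton of the zero tuple
if and only if `J` is the ideal generated by `x_1, …, x_d`. -/
theorem stmt8 (d : ℕ) (H : Type*) [NormedAddCommGroup H] [InnerProductSpace ℂ H]
    [CompleteSpace H] [TopologicalSpace.SeparableSpace H]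
    (hinf : ¬ FiniteDimensional ℂ H)
    (J : Ideal (FreeAlgebra ℂ (Fin d)))
    (htwosided : ∀ a ∈ J, ∀ r : FreeAlgebra ℂ (Fin d), a * r ∈ J)
    (hhom : Submodule.restrictScalars ℂ J =
      Submodule.span ℂ {p : FreeAlgebra ℂ (Fin d) | p ∈ J ∧ ∃ n, p ∈ freeGrade d n}) :
    {T : Fin d → (H →L[ℂ] H) | ∀ p ∈ J, FreeAlgebra.lift ℂ T p = 0} = {0}
      ↔ J = Ideal.span (Set.range (FreeAlgebra.ι ℂ : Fin d → FreeAlgebra ℂ (Fin d))) :=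
  stmt8_general d H hinf J hhom
end

section
/- Let $q, r \in M_d(\mathbb{C})$ be admissible matrices with all $q_{ij}, r_{ij} \neq 1$ for $i \neq j$. Suppose $U = (u_{ij})$ is a $d \times d$ unitary matrix such that for each pair $i \neq j$, the vector $\sum_{k,l}(u_{ik}u_{jl} - r_{ij}u_{jk}u_{il})\, e_k \otimes e_l$ lies in $\mathrm{span}\{e_m \otimes e_n - q_{mn}e_n \otimes e_m : m \neq n\} \subseteq \mathbb{C}^d \otimes \mathbb{C}^d$. Then there is a permutation $\sigma \in S_d$ and unimodular scalars such that $U = U_\sigma^{-1}D$ with $D$ diagonal unitary, and $r_{ij} = q_{\sigma(i)\sigma(j)}$ for all $i \neq j$, i.e., $r = U_{\sigma^{-1}} q U_{\sigma^{-1}}^{-1}$. -/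
/-!
Every generator `e_m ⊗ e_n - q_{mn} e_n ⊗ e_m` has zero `e_k ⊗ e_k`-coefficient, so the relation
for rows `i ≠ j` gives `(1 - r_{ij}) u_{ik} u_{jk} = 0`: distinct rows of `U` have disjoint
supports. Together with the orthonormality of the columns this makes `U` a permutation matrix
times a unimodular diagonal. Since `q_{mn} q_{nm} = 1`, the functional `w ↦ w_{nm} + q_{mn} w_{mn}`
also kills every generator; applied to the relation for rows `i, j`, with `m = σ i`, `n = σ j`,
it gives `(q_{mn} - r_{ij}) D_m D_n = 0`.
-/

open scoped Matrix

section QCommRelations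

variable {ι K : Type*} [DecidableEq ι] [CommRing K]

/-- `span {e_m ⊗ e_n - q_{mn} e_n ⊗ e_m : m ≠ n}`, with `K^ι ⊗ K^ι` modelled as `ι × ι → K`. -/
def qCommRelations (q : Matrix ι ι K) : Submodule K (ι × ι → K) :=
  Submodule.span K {v | ∃ m n : ι, m ≠ n ∧
    v = fun p => (if p = (m, n) then (1 : K) else 0)
      - q m n * (if p = (n, m) then (1 : K) else 0)}

variable {q : Matrix ι ι K} {w : ι × ι → K}

theorem apply_diag_eq_zero_of_mem_qCommRelations (hw : w ∈ qCommRelations q) (k : ι) :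
    w (k, k) = 0 := by
  induction hw using Submodule.span_induction with
  | mem v hv =>
    obtain ⟨m, n, hmn, rfl⟩ := hv
    grind
  | zero => rfl
  | add x y _ _ hx hy => simp [hx, hy]
  | smul a x _ hx => simp [hx]

theorem apply_swap_add_mul_eq_zero_of_mem_qCommRelations (hw : w ∈ qCommRelations q)
    {m n : ι} (hmn : m ≠ n) (hq : q m n * q n m = 1) :
    w (n, m) + q m n * w (m, n) = 0 := by
  induction hw using Submodule.span_induction with
  | mem v hv =>
    obtain ⟨m', n', hmn', rfl⟩ := hv
    simp only [Prod.mk.injEq]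
    split_ifs <;> grind
  | zero => simp
  | add x y _ _ hx hy => simp only [Pi.add_apply]; linear_combination hx + hy
  | smul a x _ hx => simp only [Pi.smul_apply, smul_eq_mul]; linear_combination a * hx

variable [IsDomain K] {u v : ι → K} {c : K}

theorem mul_eq_zero_of_mem_qCommRelations (hc : c ≠ 1)
    (hw : (fun p : ι × ι => u p.1 * v p.2 - c * (v p.1 * u p.2)) ∈ qCommRelations q) (k : ι) :
    u k * v k = 0 := by
  have h : (1 - c) * (u k * v k) = 0 := by
    linear_combination apply_diag_eq_zero_of_mem_qCommRelations hw k
  exact (mul_eq_zero.mp h).resolve_left (sub_ne_zero.mpr hc.symm)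

theorem eq_of_mem_qCommRelations {m n : ι} (hmn : m ≠ n) (hq : q m n * q n m = 1)
    (hum : u m ≠ 0) (hvn : v n ≠ 0) (hun : u n = 0) (hvm : v m = 0)
    (hw : (fun p : ι × ι => u p.1 * v p.2 - c * (v p.1 * u p.2)) ∈ qCommRelations q) :
    c = q m n := by
  have h := apply_swap_add_mul_eq_zero_of_mem_qCommRelations hw hmn hq
  simp only [hun, hvm] at h
  have h' : (q m n - c) * (u m * v n) = 0 := by linear_combination h
  exact (sub_eq_zero.mp ((mul_eq_zero.mp h').resolve_right (mul_ne_zero hum hvn))).symm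

end QCommRelations

section Monomial

variable {n 𝕜 : Type*} [Fintype n] [RCLike 𝕜] {U : Matrix n n 𝕜}

theorem Matrix.conjTranspose_mul_self_apply_of_col_support {i k : n}
    (hk : ∀ j, j ≠ i → U j k = 0) (l : n) : (Uᴴ * U) k l = star (U i k) * U i l := by
  rw [Matrix.mul_apply, Finset.sum_eq_single i (fun j _ hj => by simp [hk j hj]) (by simp)]
  rfl

variable [DecidableEq n]

theorem Matrix.exists_perm_of_conjTranspose_mul_self_eq_one (hU : Uᴴ * U = 1)
    (hdisj : ∀ i j, i ≠ j → ∀ k, U i k * U j k = 0) :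
    ∃ σ : Equiv.Perm n, ∃ D : n → 𝕜, (∀ l, ‖D l‖ = 1) ∧
      ∀ k l, U k l = if σ k = l then D l else 0 := by
  have hcol : ∀ l, ∃ i, U i l ≠ 0 := by
    intro l
    by_contra! h
    simpa [Matrix.mul_apply, h] using congrFun (congrFun hU l) l
  choose τ hτ using hcol
  have hsupp : ∀ j l, U j l ≠ 0 → j = τ l := fun j l hj => by
    by_contra hne
    exact mul_ne_zero hj (hτ l) (hdisj j (τ l) hne l)
  have hcolτ : ∀ l l', (Uᴴ * U) l l' = star (U (τ l) l) * U (τ l) l' := fun l =>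
    Matrix.conjTranspose_mul_self_apply_of_col_support fun j hj =>
      by_contra fun h => hj (hsupp j l h)
  have hinj : Function.Injective τ := fun l l' h => by
    by_contra hne
    have := hcolτ l l'
    rw [hU, Matrix.one_apply_ne hne] at this
    exact mul_ne_zero (star_ne_zero.mpr (hτ l)) (by rw [h]; exact hτ l') this.symm
  refine ⟨(Equiv.ofBijective τ (Finite.injective_iff_bijective.mp hinj)).symm,
    fun l => U (τ l) l, fun l => ?_, fun k l => ?_⟩
  · have h := hcolτ l l
    rw [hU, Matrix.one_apply_eq, RCLike.star_def, RCLike.conj_mul] at h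
    exact (pow_eq_one_iff_of_nonneg (norm_nonneg _) two_ne_zero).mp (by exact_mod_cast h.symm)
  · by_cases h : k = τ l
    · subst h
      simp
    · rw [if_neg (by simpa [Equiv.symm_apply_eq] using h)]
      exact by_contra fun h' => h (hsupp k l h')

end Monomial

theorem stmt17_general (d : ℕ) (q r : Matrix (Fin d) (Fin d) ℂ)
    (hqadm : ∀ i j, i ≠ j → q i j ≠ 0 ∧ q j i = (q i j)⁻¹)
    (hr1 : ∀ i j, i ≠ j → r i j ≠ 1)
    (U : Matrix (Fin d) (Fin d) ℂ) (hU : Uᴴ * U = 1)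
    (hrel : ∀ i j : Fin d, i ≠ j →
      (fun p : Fin d × Fin d => U i p.1 * U j p.2 - r i j * (U j p.1 * U i p.2)) ∈
        Submodule.span ℂ {v : Fin d × Fin d → ℂ | ∃ m n : Fin d, m ≠ n ∧
          v = fun p => (if p = (m, n) then (1 : ℂ) else 0)
                - q m n * (if p = (n, m) then (1 : ℂ) else 0)}) :
    ∃ σ : Equiv.Perm (Fin d), (∃ D : Fin d → ℂ, (∀ l, ‖D l‖ = 1) ∧
        ∀ k l, U k l = if σ k = l then D l else 0) ∧
      ∀ i j, i ≠ j → r i j = q (σ i) (σ j) := by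
  obtain ⟨σ, D, hD, hUσ⟩ := U.exists_perm_of_conjTranspose_mul_self_eq_one hU
    fun i j hij => mul_eq_zero_of_mem_qCommRelations (hr1 i j hij) (hrel i j hij)
  refine ⟨σ, ⟨D, hD, hUσ⟩, fun i j hij => ?_⟩
  have hσij : σ i ≠ σ j := σ.injective.ne hij
  have hq : q (σ i) (σ j) * q (σ j) (σ i) = 1 := by
    obtain ⟨hq0, hqinv⟩ := hqadm _ _ hσij
    rw [hqinv, mul_inv_cancel₀ hq0]
  have hD0 : ∀ l, D l ≠ 0 := fun l => norm_ne_zero_iff.mp (by rw [hD]; exact one_ne_zero)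
  exact eq_of_mem_qCommRelations hσij hq (by simp [hUσ, hD0]) (by simp [hUσ, hD0])
    (by simp [hUσ, hσij]) (by simp [hUσ, hσij.symm]) (hrel i j hij)

/-- If `q, r` are admissible matrices with all off-diagonal entries `≠ 1`, and `U` is a
unitary matrix such that for each `i ≠ j` the vector
`∑_{k,l} (u_{ik} u_{jl} - r_{ij} u_{jk} u_{il}) e_k ⊗ e_l` lies in
`span{e_m ⊗ e_n - q_{mn} e_n ⊗ e_m : m ≠ n}` (tensors modeled as functions on pairs), then
`U` is a permutation matrix times a diagonal unitary — `U_{kl} = D_l` if `l = σ(k)` and `0`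
otherwise, with `|D_l| = 1` — and `r_{ij} = q_{σ(i)σ(j)}` for all `i ≠ j`. -/
theorem stmt17 (d : ℕ) (q r : Matrix (Fin d) (Fin d) ℂ)
    (hqdiag : ∀ i, q i i = 0) (hqadm : ∀ i j, i ≠ j → q i j ≠ 0 ∧ q j i = (q i j)⁻¹)
    (hq1 : ∀ i j, i ≠ j → q i j ≠ 1)
    (hrdiag : ∀ i, r i i = 0) (hradm : ∀ i j, i ≠ j → r i j ≠ 0 ∧ r j i = (r i j)⁻¹)
    (hr1 : ∀ i j, i ≠ j → r i j ≠ 1)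
    (U : Matrix (Fin d) (Fin d) ℂ) (hU : Uᴴ * U = 1)
    (hrel : ∀ i j : Fin d, i ≠ j →
      (fun p : Fin d × Fin d => U i p.1 * U j p.2 - r i j * (U j p.1 * U i p.2)) ∈
        Submodule.span ℂ {v : Fin d × Fin d → ℂ | ∃ m n : Fin d, m ≠ n ∧
          v = fun p => (if p = (m, n) then (1 : ℂ) else 0)
                - q m n * (if p = (n, m) then (1 : ℂ) else 0)}) :
    ∃ σ : Equiv.Perm (Fin d), (∃ D : Fin d → ℂ, (∀ l, ‖D l‖ = 1) ∧
        ∀ k l, U k l = if σ k = l then D l else 0) ∧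
      ∀ i j, i ≠ j → r i j = q (σ i) (σ j) :=
  stmt17_general d q r hqadm hr1 U hU hrel
end
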